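/- arXiv:1111.0412 — 2 statements merged into one kernel-verified Lean document; each statement's English description precedes it below -/
import Mathlib

section
/- The index of the sublattice M ⊕ R in L_- is 3, where L_- = U ⊕ U(2) ⊕ E8(2), M = U ⊕ U(2) ⊕ A2(2) is primitively embedded in L_-, and R ≅ E6(2) is its orthogonal complement; equivalently, |det(M)| · |det(R)| = 9 · |det(L_-)|. -/
noncomputable section
open Matrix

/-- The Gram matrix of `M = U ⊕ U(2) ⊕ A2(2)`. -/
def Mgram : Matrix (Fin 6) (Fin 6) ℤ :=
  !![0,1,0,0,0,0; 1,0,0,0,0,0; 0,0,0,2,0,0; 0,0,2,0,0,0; 0,0,0,0,-4,2; 0,0,0,0,2,-4]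

/-- The Gram matrix of the negative definite root lattice `E6`
(negative of the Cartan matrix). -/
def E6gram : Matrix (Fin 6) (Fin 6) ℤ :=
  !![-2,1,0,0,0,0;
    1,-2,1,0,0,0;
    0,1,-2,1,0,1;
    0,0,1,-2,1,0;
    0,0,0,1,-2,0;
    0,0,1,0,0,-2]

/-- The Gram matrix of `R = E6(2)`, the orthogonal complement of `M` in `L₋`. -/
def Rgram : Matrix (Fin 6) (Fin 6) ℤ := 2 • E6gram

/-- The Gram matrix of `L₋ = U ⊕ U(2) ⊕ E8(2)`. -/
def Lgram : Matrix (Fin 12) (Fin 12) ℤ :=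
  !![0,1,0,0,0,0,0,0,0,0,0,0;
    1,0,0,0,0,0,0,0,0,0,0,0;
    0,0,0,2,0,0,0,0,0,0,0,0;
    0,0,2,0,0,0,0,0,0,0,0,0;
    0,0,0,0,-4,2,0,0,0,0,0,0;
    0,0,0,0,2,-4,2,0,0,0,0,0;
    0,0,0,0,0,2,-4,2,0,0,0,2;
    0,0,0,0,0,0,2,-4,2,0,0,0;
    0,0,0,0,0,0,0,2,-4,2,0,0;
    0,0,0,0,0,0,0,0,2,-4,2,0;
    0,0,0,0,0,0,0,0,0,2,-4,0;
    0,0,0,0,0,0,2,0,0,0,0,-4]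

/-! The determinants are `det M = (-1)·(-4)·12 = 48`, `det R = 2⁶·3 = 192` and
`det L₋ = (-1)·(-4)·2⁸ = 1024`, and `48 · 192 = 9 · 1024`. They are evaluated by a verified
cofactor expansion run in the kernel. -/

section LaplaceDet

variable {R : Type*} [CommRing R] [DecidableEq R]

/-- Skipping the zero entries keeps the expansion of sparse matrices, such as the Gram
matrices of root lattices, small. -/
def laplaceDet : {n : ℕ} → Matrix (Fin n) (Fin n) R → R
  | 0, _ => 1
  | _ + 1, A => (List.ofFn fun j =>
      if A 0 j = 0 then 0
      else (-1) ^ (j : ℕ) * A 0 j * laplaceDet (A.submatrix Fin.succ j.succAbove)).sum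

theorem laplaceDet_eq_det : ∀ {n : ℕ} (A : Matrix (Fin n) (Fin n) R), laplaceDet A = A.det
  | 0, A => by rw [laplaceDet, det_fin_zero]
  | n + 1, A => by
    rw [laplaceDet, List.sum_ofFn, det_succ_row_zero]
    refine Finset.sum_congr rfl fun j _ => ?_
    split_ifs with hj
    · simp [hj]
    · rw [laplaceDet_eq_det]

end LaplaceDet

theorem Mgram_det : Mgram.det = 48 := by
  rw [← laplaceDet_eq_det]
  decide +kernel

theorem Rgram_det : Rgram.det = 192 := by
  rw [← laplaceDet_eq_det]
  decide +kernel

theorem Lgram_det : Lgram.det = 1024 := by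
  rw [← laplaceDet_eq_det]
  decide +kernel

/-- The index of the sublattice `M ⊕ R` in `L₋` is 3, where
`L₋ = U ⊕ U(2) ⊕ E8(2)`, `M = U ⊕ U(2) ⊕ A2(2)` is primitively embedded in
`L₋` and `R ≅ E6(2)` is its orthogonal complement; equivalently (via
`[L₋ : M ⊕ R]² = det(M)·det(R)/det(L₋)`), one has
`|det(M)| · |det(R)| = 9 · |det(L₋)|`. -/
theorem index_of_M_oplus_R :
    (Mgram.det * Rgram.det).natAbs = 9 * Lgram.det.natAbs := by
  rw [Mgram_det, Rgram_det, Lgram_det]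
  rfl
end
end

section
/- The map sending a norm −4 vector r of E6(2) to (r/2) mod E6(2) in the 2-part of the discriminant group induces a bijection between the set of ±-pairs {r, −r} of norm −4 vectors in E6(2) (36 pairs from 72 vectors) and the set of 36 non-isotropic vectors of the F_2-quadratic form (q_{E6(2)})_2 ≅ u ⊕ u ⊕ v. -/
noncomputable section
open Matrix

/-- The `E6`-norm of an integral vector; its norm in `E6(2)` is `2 * qE6 v`. -/
def qE6 (v : Fin 6 → ℤ) : ℤ := dotProduct v (E6gram.mulVec v)

/-- Reduction mod 2, realizing `(r/2 mod E6(2)) ∈ (q_{E6(2)})₂`: the 2-torsion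
part of the discriminant group of `E6(2)` is `(1/2)E6(2)/E6(2) ≅ (ℤ/2)⁶`, and
`r ↦ r/2 mod E6(2)` corresponds to reduction of coordinates mod 2. -/
def reduce (r : Fin 6 → ℤ) : Fin 6 → ZMod 2 := fun i => (r i : ZMod 2)

/-- The quadratic form `(q_{E6(2)})₂ ≅ u ⊕ u ⊕ v` on `(ℤ/2)⁶` induced by
`q(r/2 mod E6(2)) = (r/2)² mod 2ℤ`; explicitly `∑ xᵢ² + ∑_{edges of E6} xᵢxⱼ`. -/
def qF : (Fin 6 → ZMod 2) → ZMod 2 := fun x =>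
  (x 0 ^ 2 + x 1 ^ 2 + x 2 ^ 2 + x 3 ^ 2 + x 4 ^ 2 + x 5 ^ 2) +
    (x 0 * x 1 + x 1 * x 2 + x 2 * x 3 + x 3 * x 4 + x 2 * x 5)

/-! The Tits form `T = -qE6 / 2` of the `E6` diagram is positive definite: Cauchy–Schwarz
against the fundamental weights bounds each coordinate of a root (`T r = 1`) by that of the
highest root, so the 72 roots lie in a finite box. If two roots are congruent mod 2, write
`r = r' + 2 s`; the parallelogram law gives `T (r' + s) + T s = 1`, so `s = 0` or `r' + s = 0`,
i.e. `r = ±r'`. Hence reduction mod 2 is exactly two-to-one on the roots, its image has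
36 elements, and it lies in the 36 non-isotropic vectors, so it is all of them. -/

def titsForm (v : Fin 6 → ℤ) : ℤ :=
  v 0 ^ 2 + v 1 ^ 2 + v 2 ^ 2 + v 3 ^ 2 + v 4 ^ 2 + v 5 ^ 2
    - (v 0 * v 1 + v 1 * v 2 + v 2 * v 3 + v 3 * v 4 + v 2 * v 5)

lemma qE6_eq_neg_two_mul_titsForm (v : Fin 6 → ℤ) : qE6 v = -2 * titsForm v := by
  simp [qE6, E6gram, titsForm, dotProduct, mulVec, Fin.sum_univ_six]
  ring

lemma qF_reduce (v : Fin 6 → ℤ) : qF (reduce v) = titsForm v := by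
  simp only [qF, reduce, titsForm]
  push_cast
  rw [sub_eq_add_neg, ZMod.neg_eq_self_mod_two]

lemma titsForm_neg (v : Fin 6 → ℤ) : titsForm (-v) = titsForm v := by
  simp only [titsForm, Pi.neg_apply]
  ring

lemma titsForm_two_smul (v : Fin 6 → ℤ) : titsForm (2 • v) = 4 * titsForm v := by
  simp only [titsForm, Pi.smul_apply]
  ring

lemma titsForm_add_add_titsForm_sub (u w : Fin 6 → ℤ) :
    titsForm (u + w) + titsForm (u - w) = 2 * titsForm u + 2 * titsForm w := by
  simp only [titsForm, Pi.add_apply, Pi.sub_apply]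
  ring

/-- Cauchy–Schwarz against the fundamental weight `ωᵢ`: `vᵢ² ≤ 2 (C⁻¹)ᵢᵢ T v` for the Cartan
matrix `C`, so the weights are `6 (C⁻¹)ᵢᵢ`. -/
lemma three_mul_sq_le_titsForm (v : Fin 6 → ℤ) (i : Fin 6) :
    3 * v i ^ 2 ≤ ![8, 20, 36, 20, 8, 12] i * titsForm v := by
  fin_cases i <;> simp only [titsForm] <;> dsimp
  · linarith [sq_nonneg (2 * v 1 - v 2 - v 0), sq_nonneg (3 * v 2 - 2 * v 3 - 2 * v 5 - v 0),
      sq_nonneg (4 * v 3 - 3 * v 4 - 2 * v 5 - v 0), sq_nonneg (5 * v 4 - 2 * v 5 - v 0),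
      sq_nonneg (4 * v 5 - 3 * v 0)]
  · linarith [sq_nonneg (2 * v 0 - v 1), sq_nonneg (2 * v 2 - v 3 - v 5 - v 1),
      sq_nonneg (3 * v 3 - 2 * v 4 - v 5 - v 1), sq_nonneg (4 * v 4 - v 5 - v 1),
      sq_nonneg (5 * v 5 - 3 * v 1)]
  · linarith [sq_nonneg (2 * v 0 - v 1), sq_nonneg (3 * v 1 - 2 * v 2),
      sq_nonneg (2 * v 3 - v 4 - v 2), sq_nonneg (3 * v 4 - v 2), sq_nonneg (2 * v 5 - v 2)]
  · linarith [sq_nonneg (2 * v 0 - v 1), sq_nonneg (3 * v 1 - 2 * v 2),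
      sq_nonneg (4 * v 2 - 3 * v 5 - 3 * v 3), sq_nonneg (2 * v 4 - v 3),
      sq_nonneg (5 * v 5 - 3 * v 3)]
  · linarith [sq_nonneg (2 * v 0 - v 1), sq_nonneg (3 * v 1 - 2 * v 2),
      sq_nonneg (4 * v 2 - 3 * v 3 - 3 * v 5), sq_nonneg (5 * v 3 - 3 * v 5 - 4 * v 4),
      sq_nonneg (4 * v 5 - 3 * v 4)]
  · linarith [sq_nonneg (2 * v 0 - v 1), sq_nonneg (3 * v 1 - 2 * v 2),
      sq_nonneg (4 * v 2 - 3 * v 3 - 3 * v 5), sq_nonneg (5 * v 3 - 4 * v 4 - 3 * v 5),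
      sq_nonneg (2 * v 4 - v 5)]

lemma titsForm_nonneg (v : Fin 6 → ℤ) : 0 ≤ titsForm v := by
  have h := three_mul_sq_le_titsForm v 0
  simp only [Matrix.cons_val_zero] at h
  linarith [sq_nonneg (v 0)]

lemma titsForm_eq_zero_iff {v : Fin 6 → ℤ} : titsForm v = 0 ↔ v = 0 := by
  refine ⟨fun h => funext fun i => ?_, fun h => by simp [h, titsForm]⟩
  have hi := three_mul_sq_le_titsForm v i
  rw [h, mul_zero] at hi
  exact pow_eq_zero_iff two_ne_zero |>.1 (by linarith [sq_nonneg (v i)])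

def highestRoot : Fin 6 → ℤ := ![1, 2, 3, 2, 1, 2]

lemma abs_le_highestRoot {r : Fin 6 → ℤ} (hr : titsForm r = 1) (i : Fin 6) :
    |r i| ≤ highestRoot i := by
  have hi := three_mul_sq_le_titsForm r i
  rw [hr, mul_one] at hi
  have hw : ![8, 20, 36, 20, 8, 12] i < 3 * (highestRoot i + 1) ^ 2 := by
    fin_cases i <;> decide
  have hlt := abs_lt_of_sq_lt_sq (by linarith : r i ^ 2 < (highestRoot i + 1) ^ 2)
    (by fin_cases i <;> decide)
  omega

def e6Roots : Finset (Fin 6 → ℤ) :=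
  (Fintype.piFinset fun i => Finset.Icc (-highestRoot i) (highestRoot i)).filter
    (titsForm · = 1)

lemma mem_e6Roots {r : Fin 6 → ℤ} : r ∈ e6Roots ↔ titsForm r = 1 := by
  simp only [e6Roots, Finset.mem_filter, Fintype.mem_piFinset, Finset.mem_Icc,
    and_iff_right_iff_imp]
  exact fun hr i => abs_le.1 (abs_le_highestRoot hr i)

lemma card_e6Roots : e6Roots.card = 72 := by
  decide +kernel

lemma card_filter_qF_eq_one : (Finset.univ.filter fun x => qF x = 1).card = 36 := by
  decide

lemma reduce_neg (v : Fin 6 → ℤ) : reduce (-v) = reduce v := by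
  funext i
  simp [reduce, ZMod.neg_eq_self_mod_two]

lemma exists_eq_add_two_smul_of_reduce_eq {r r' : Fin 6 → ℤ} (h : reduce r = reduce r') :
    ∃ s, r = r' + 2 • s := by
  refine ⟨fun i => (r i - r' i) / 2, funext fun i => ?_⟩
  have := (ZMod.intCast_eq_intCast_iff_dvd_sub _ _ _).1 (congrFun h i).symm
  simp only [Pi.add_apply, two_nsmul]
  omega

lemma eq_or_eq_neg_of_reduce_eq {r r' : Fin 6 → ℤ} (hr : titsForm r = 1)
    (hr' : titsForm r' = 1) (h : reduce r = reduce r') : r = r' ∨ r = -r' := by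
  obtain ⟨s, rfl⟩ := exists_eq_add_two_smul_of_reduce_eq h
  have hsum : titsForm (r' + s) + titsForm s = 1 := by
    have := titsForm_add_add_titsForm_sub (r' + 2 • s) r'
    rw [show r' + 2 • s + r' = 2 • (r' + s) by abel, show r' + 2 • s - r' = 2 • s by abel,
      titsForm_two_smul, titsForm_two_smul, hr, hr'] at this
    linarith
  have := titsForm_nonneg s
  have := titsForm_nonneg (r' + s)
  rcases (by omega : titsForm s = 0 ∨ titsForm (r' + s) = 0) with hs | hs
  · left
    simp [titsForm_eq_zero_iff.1 hs]
  · right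
    rw [eq_neg_of_add_eq_zero_right (titsForm_eq_zero_iff.1 hs)]
    abel

lemma reduce_eq_reduce_iff {r r' : Fin 6 → ℤ} (hr : titsForm r = 1) (hr' : titsForm r' = 1) :
    reduce r = reduce r' ↔ r = r' ∨ r = -r' := by
  refine ⟨eq_or_eq_neg_of_reduce_eq hr hr', ?_⟩
  rintro (rfl | rfl)
  exacts [rfl, reduce_neg r']

lemma card_filter_reduce_eq {r : Fin 6 → ℤ} (hr : r ∈ e6Roots) :
    (e6Roots.filter (reduce · = reduce r)).card = 2 := by
  have hne : r ≠ -r := fun h => by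
    simp [self_eq_neg.mp h, mem_e6Roots, titsForm] at hr
  have hneg : -r ∈ e6Roots := by rwa [mem_e6Roots, titsForm_neg, ← mem_e6Roots]
  suffices h : e6Roots.filter (reduce · = reduce r) = {r, -r} by
    rw [h, Finset.card_pair hne]
  ext r'
  simp only [Finset.mem_filter, Finset.mem_insert, Finset.mem_singleton]
  constructor
  · rintro ⟨hr', h⟩
    exact eq_or_eq_neg_of_reduce_eq (mem_e6Roots.1 hr') (mem_e6Roots.1 hr) h
  · rintro (rfl | rfl)
    exacts [⟨hr, rfl⟩, ⟨hneg, reduce_neg r⟩]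

lemma image_reduce_e6Roots :
    e6Roots.image reduce = Finset.univ.filter fun x => qF x = 1 := by
  refine Finset.eq_of_subset_of_card_le (fun x hx => ?_) ?_
  · obtain ⟨r, hr, rfl⟩ := Finset.mem_image.1 hx
    simp [qF_reduce, mem_e6Roots.1 hr]
  · have h : 72 = (e6Roots.image reduce).card * 2 := by
      rw [← card_e6Roots, Finset.card_eq_sum_card_image reduce e6Roots, ← smul_eq_mul, ← Finset.sum_const]
      refine Finset.sum_congr rfl fun x hx => ?_
      obtain ⟨r, hr, rfl⟩ := Finset.mem_image.1 hx
      exact card_filter_reduce_eq hr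
    rw [card_filter_qF_eq_one]
    omega

/-- The map sending a norm `−4` vector `r` of `E6(2)` to `(r/2) mod E6(2)` in
the 2-part of the discriminant group induces a bijection between the 36
`±`-pairs `{r, −r}` of the 72 norm `−4` vectors of `E6(2)` and the 36
non-isotropic vectors of the `F₂`-quadratic form `(q_{E6(2)})₂ ≅ u ⊕ u ⊕ v`. -/
theorem roots_biject_nonisotropic :
    (∀ r : Fin 6 → ℤ, ∃ m : ℤ, qE6 r = 2 * m ∧ (m : ZMod 2) = qF (reduce r)) ∧
    {r : Fin 6 → ℤ | 2 * qE6 r = -4}.ncard = 72 ∧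
    {x : Fin 6 → ZMod 2 | qF x = 1}.ncard = 36 ∧
    (∀ r : Fin 6 → ℤ, 2 * qE6 r = -4 → qF (reduce r) = 1) ∧
    (∀ r r' : Fin 6 → ℤ, 2 * qE6 r = -4 → 2 * qE6 r' = -4 →
      (reduce r = reduce r' ↔ (r = r' ∨ r = -r'))) ∧
    (∀ x : Fin 6 → ZMod 2, qF x = 1 → ∃ r : Fin 6 → ℤ, 2 * qE6 r = -4 ∧ reduce r = x) := by
  have hroot (r : Fin 6 → ℤ) : 2 * qE6 r = -4 ↔ titsForm r = 1 := by
    rw [qE6_eq_neg_two_mul_titsForm]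
    omega
  simp only [hroot]
  refine ⟨fun r => ⟨-titsForm r, qE6_eq_neg_two_mul_titsForm r ▸ by ring, ?_⟩, ?_, ?_,
    fun r hr => by simp [qF_reduce, hr], fun r r' => reduce_eq_reduce_iff, fun x hx => ?_⟩
  · rw [qF_reduce, Int.cast_neg, ZMod.neg_eq_self_mod_two]
  · rw [← card_e6Roots, ← Set.ncard_coe_finset]
    exact congrArg Set.ncard (Set.ext fun r => mem_e6Roots.symm)
  · rw [← card_filter_qF_eq_one, ← Set.ncard_coe_finset, Finset.coe_filter_univ]
  · have hx' : x ∈ e6Roots.image reduce := by simpa [image_reduce_e6Roots] using hx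
    obtain ⟨r, hr, rfl⟩ := Finset.mem_image.1 hx'
    exact ⟨r, mem_e6Roots.1 hr, rfl⟩
end
end
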